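/- Let (I,Γ) be a form ideal in R. For any elementary symplectic transvection f (short root T_{ij}(r) with j ∉ {±i} or long root T_{i,-i}(r), r ∈ R) and any v ∈ I^{2l}, the difference ⟨(fv)_-, (fv)_+⟩ - ⟨v_-, v_+⟩ lies in Γ, where v_- = Σ_{k<0} e_k v_k and v_+ = Σ_{k>0} e_k v_k. -/
import Mathlib


open scoped BigOperators

/-- Index set {-l,…,-1,1,…,l}: `Sum.inl k` represents -(k+1), `Sum.inr k` represents k+1. -/
abbrev Idx (l : ℕ) := Fin l ⊕ Fin l

namespace Idx
/-- negation of an index -/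
def neg {l : ℕ} : Idx l → Idx l := Sum.swap
/-- sign of an index, as a ring element -/
def sgn (R : Type*) [CommRing R] {l : ℕ} : Idx l → R
  | Sum.inl _ => -1
  | Sum.inr _ => 1
end Idx

variable {R : Type*} [CommRing R] {l : ℕ}

/-- the standard symplectic form ⟨u,v⟩ = Σᵢ sgn(i)·uᵢ·v₋ᵢ -/
def sform (u v : Idx l → R) : R := ∑ i : Idx l, Idx.sgn R i * u i * v (Idx.neg i)

/-- standard basis vector e_i -/
def sbv (R : Type*) [CommRing R] {l : ℕ} (i : Idx l) : Idx l → R := Pi.single i 1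

/-- Eichler–Siegel–Dickson transformation T(u,v,a) : w ↦ w + u(⟨v,w⟩+a⟨u,w⟩) + v⟨u,w⟩ -/
def esd (u v : Idx l → R) (a : R) (w : Idx l → R) : Idx l → R :=
  w + (sform v w + a * sform u w) • u + (sform u w) • v

/-- elementary symplectic transvection: T_{ij}(a) = T(e_i, e_{-j}·a·sgn(-j), 0) for j ≠ -i,
and the long root T_{i,-i}(a) = T(e_i, 0, a). -/
def tvGen (i j : Idx l) (a : R) : (Idx l → R) → (Idx l → R) :=
  if j = Idx.neg i then esd (sbv R i) 0 a
  else esd (sbv R i) ((a * Idx.sgn R (Idx.neg j)) • sbv R (Idx.neg j)) 0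

/-- negative part v₋ of a vector -/
def vminus (v : Idx l → R) : Idx l → R
  | Sum.inl j => v (Sum.inl j)
  | Sum.inr _ => 0

/-- positive part v₊ of a vector -/
def vplus (v : Idx l → R) : Idx l → R
  | Sum.inl _ => 0
  | Sum.inr j => v (Sum.inr j)

/-- the negative indices -l, …, -1 in order -/
def negIdxList (l : ℕ) : List (Idx l) := ((List.finRange l).reverse).map Sum.inl

/-- the positive indices 1, …, l in order -/
def posIdxList (l : ℕ) : List (Idx l) := (List.finRange l).map Sum.inr

/-- all indices -l, …, -1, 1, …, l in order -/
def allIdxList (l : ℕ) : List (Idx l) := negIdxList l ++ posIdxList l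

lemma Idx.neg_neg (i : Idx l) : Idx.neg (Idx.neg i) = i := Sum.swap_swap i

lemma Q_eq (v : Idx l → R) :
    sform (vminus v) (vplus v) = ∑ k : Fin l, -(v (Sum.inl k) * v (Sum.inr k)) := by
  unfold sform
  rw [Fintype.sum_sum_type]
  simp [vminus, vplus, Idx.sgn, Idx.neg]

lemma sform_sbv_left (i : Idx l) (w : Idx l → R) :
    sform (sbv R i) w = Idx.sgn R i * w (Idx.neg i) := by
  unfold sform sbv
  rw [Finset.sum_eq_single i]
  · simp
  · intro t _ ht; simp [Pi.single_apply, ht]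
  · simp

lemma sform_zero_left (w : Idx l → R) : sform (0 : Idx l → R) w = 0 := by
  simp [sform]

lemma sform_smul_left (c : R) (u w : Idx l → R) : sform (c • u) w = c * sform u w := by
  unfold sform
  rw [Finset.mul_sum]
  refine Finset.sum_congr rfl fun t _ => ?_
  simp [mul_comm, mul_assoc, mul_left_comm]

lemma Q_add_single (v : Idx l → R) (i : Idx l) (c : R) :
    sform (vminus (v + c • sbv R i)) (vplus (v + c • sbv R i)) =
    sform (vminus v) (vplus v) - c * v (Idx.neg i) := by
  rw [Q_eq, Q_eq]
  cases i with
  | inl k =>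
    have h : ∀ k' ∈ Finset.univ, -((v + c • sbv R (Sum.inl k)) (Sum.inl k') *
        (v + c • sbv R (Sum.inl k)) (Sum.inr k')) =
        -(v (Sum.inl k') * v (Sum.inr k')) + (if k' = k then -(c * v (Sum.inr k)) else 0) := by
      intro k' _
      simp only [Pi.add_apply, Pi.smul_apply, sbv, Pi.single_apply, smul_eq_mul]
      by_cases hk : k' = k <;> simp [hk] <;> ring
    rw [Finset.sum_congr rfl h, Finset.sum_add_distrib, Finset.sum_ite_eq' Finset.univ k]
    simp [Idx.neg]
    ring
  | inr k =>
    have h : ∀ k' ∈ Finset.univ, -((v + c • sbv R (Sum.inr k)) (Sum.inl k') *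
        (v + c • sbv R (Sum.inr k)) (Sum.inr k')) =
        -(v (Sum.inl k') * v (Sum.inr k')) + (if k' = k then -(c * v (Sum.inl k)) else 0) := by
      intro k' _
      simp only [Pi.add_apply, Pi.smul_apply, sbv, Pi.single_apply, smul_eq_mul]
      by_cases hk : k' = k <;> simp [hk] <;> ring
    rw [Finset.sum_congr rfl h, Finset.sum_add_distrib, Finset.sum_ite_eq' Finset.univ k]
    simp [Idx.neg]
    ring


/-- for any elementary symplectic transvection f = T_{ij}(r) (j ∉ {±i},
covered by `tvGen i j r` with j ≠ i including the long case j = -i) and v ∈ I^{2l},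
⟨(fv)₋,(fv)₊⟩ - ⟨v₋,v₊⟩ ∈ Γ. -/
theorem transvection_defect_in_form_parameter (I : Ideal R) (Γ : AddSubgroup R)
    (hsub : ∀ x ∈ Γ, x ∈ I)
    (h2 : ∀ a ∈ I, (2 : R) * a ∈ Γ)
    (hra : ∀ r : R, ∀ a ∈ I, r * a ^ 2 ∈ Γ)
    (har : ∀ α ∈ Γ, ∀ r : R, α * r ^ 2 ∈ Γ)
    (v : Idx l → R) (hv : ∀ k, v k ∈ I)
    (i j : Idx l) (hij : i ≠ j) (r : R) :
    sform (vminus (tvGen i j r v)) (vplus (tvGen i j r v)) -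
      sform (vminus v) (vplus v) ∈ Γ := by
  by_cases hj : j = Idx.neg i
  · -- long root case
    have hw : tvGen i j r v = v + (r * (Idx.sgn R i * v (Idx.neg i))) • sbv R i := by
      funext t
      simp [tvGen, hj, esd, sform_zero_left, sform_sbv_left]
    rw [hw, Q_add_single]
    have hmem := hra (-(r * Idx.sgn R i)) (v (Idx.neg i)) (hv _)
    have heq : sform (vminus v) (vplus v) - r * (Idx.sgn R i * v (Idx.neg i)) * v (Idx.neg i) -
        sform (vminus v) (vplus v) = -(r * Idx.sgn R i) * v (Idx.neg i) ^ 2 := by ring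
    rw [heq]
    exact hmem
  · -- short root case
    set c : R := r * Idx.sgn R (Idx.neg j) * (Idx.sgn R (Idx.neg j) * v (Idx.neg (Idx.neg j))) with hc
    set d : R := Idx.sgn R i * v (Idx.neg i) * (r * Idx.sgn R (Idx.neg j)) with hd
    have hw : tvGen i j r v = (v + c • sbv R i) + d • sbv R (Idx.neg j) := by
      funext t
      simp [tvGen, hj, esd, sform_smul_left, sform_sbv_left, hc, hd, smul_smul]
    have happ : (v + c • sbv R i) (Idx.neg (Idx.neg j)) = v j := by
      rw [Idx.neg_neg]
      simp [sbv, Pi.single_apply, Ne.symm hij]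
    rw [hw, Q_add_single, Q_add_single, happ]
    have hsq : Idx.sgn R (Idx.neg j) * Idx.sgn R (Idx.neg j) = 1 := by
      cases j <;> simp [Idx.sgn, Idx.neg]
    have hε : Idx.sgn R i * Idx.sgn R (Idx.neg j) = 1 ∨
        Idx.sgn R i * Idx.sgn R (Idx.neg j) = -1 := by
      cases i <;> cases j <;> simp [Idx.sgn, Idx.neg]
    rw [hc, hd, Idx.neg_neg]
    rcases hε with h1 | h1
    · have heq : sform (vminus v) (vplus v) -
          r * Idx.sgn R (Idx.neg j) * (Idx.sgn R (Idx.neg j) * v j) * v (Idx.neg i) -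
          Idx.sgn R i * v (Idx.neg i) * (r * Idx.sgn R (Idx.neg j)) * v j -
          sform (vminus v) (vplus v) = -(2 * (r * (v (Idx.neg i) * v j))) := by
        linear_combination (-(r * v j * v (Idx.neg i))) * hsq +
          (-(r * v (Idx.neg i) * v j)) * h1
      rw [heq]
      exact neg_mem (h2 _ (Ideal.mul_mem_left I r (Ideal.mul_mem_left I _ (hv j))))
    · have heq : sform (vminus v) (vplus v) -
          r * Idx.sgn R (Idx.neg j) * (Idx.sgn R (Idx.neg j) * v j) * v (Idx.neg i) -
          Idx.sgn R i * v (Idx.neg i) * (r * Idx.sgn R (Idx.neg j)) * v j -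
          sform (vminus v) (vplus v) = 0 := by
        linear_combination (-(r * v j * v (Idx.neg i))) * hsq +
          (-(r * v (Idx.neg i) * v j)) * h1
      rw [heq]
      exact zero_mem Γ
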